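/- arXiv:1003.3471 — 2 statements merged into one kernel-verified Lean document; each statement's English description precedes it below -/
import Mathlib

section
/- Let Q and Q' be monomial primary ideals of S = K[x_1,…,x_n] with √Q = (x_1) and √Q' = (x_2,…,x_n), n ≥ 2. Then sdepth(Q ∩ Q') ≤ 1 + ⌈(n−1)/2⌉. -/
/-!
Let `x_1^a ∈ Q`, and let `c` be a monomial in `x_2, …, x_n` that is maximal (for divisibility)
outside `Q'`; it exists since `Q'` contains a power of each of `x_2, …, x_n`. Put `b = x_1^a c`.
As `Q'` is primary and `x_1 ∉ √Q'`, `b ∉ Q ∩ Q'`, while `b x_j ∈ Q ∩ Q'` for `j ≥ 2`.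
In a Stanley decomposition of `Q ∩ Q'` with all `|Z_i| ≥ k`, let `u_j K[Z_j]` be the space
containing `b x_j`. For `j ≠ j'` we cannot have both `x_j' ∈ Z_j` and `x_j ∈ Z_j'`: the two
spaces would share `b x_j x_j'`, hence coincide, and their generator would divide
`gcd(b x_j, b x_j') = b`.
So the pairs `{j, z}` with `z ∈ Z_j \ {j}` are pairwise distinct, which gives
`(n - 1)(k - 1) ≤ n(n - 1)/2`.
-/

open MvPolynomial

variable {K : Type*} [Field K]

/-- The Stanley space `u·K[Z]`: the `K`-linear span of all `u * v` where `v` is a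
monomial in the variables of `Z`. -/
noncomputable def stanleySpace {n : ℕ} (u : MvPolynomial (Fin n) K) (Z : Finset (Fin n)) :
    Submodule K (MvPolynomial (Fin n) K) :=
  Submodule.span K { w | ∃ d : Fin n →₀ ℕ, ↑d.support ⊆ (Z : Set (Fin n)) ∧
    w = u * MvPolynomial.monomial d 1 }

/-- `u` is a monomial. -/
def IsMonomial {n : ℕ} (u : MvPolynomial (Fin n) K) : Prop :=
  ∃ d : Fin n →₀ ℕ, u = MvPolynomial.monomial d 1

/-- A monomial ideal: an ideal generated by monomials. -/
def IsMonomialIdeal {n : ℕ} (I : Ideal (MvPolynomial (Fin n) K)) : Prop :=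
  ∃ G : Set (MvPolynomial (Fin n) K), (∀ u ∈ G, IsMonomial u) ∧ I = Ideal.span G

/-- `(u i, Z i)` is a Stanley decomposition of the ideal `I`:
`I = ⊕ᵢ uᵢ K[Zᵢ]` as `K`-vector spaces, with each `uᵢ` a monomial. -/
def IsStanleyDecomp {n : ℕ} (I : Ideal (MvPolynomial (Fin n) K)) {s : ℕ}
    (u : Fin s → MvPolynomial (Fin n) K) (Z : Fin s → Finset (Fin n)) : Prop :=
  (∀ i, IsMonomial (u i)) ∧
  iSupIndep (fun i => stanleySpace (u i) (Z i)) ∧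
  (⨆ i, stanleySpace (u i) (Z i)) = Submodule.restrictScalars K I

/-- The Stanley depth of a monomial ideal: the largest `k` such that there is a
Stanley decomposition all of whose Stanley spaces have dimension at least `k`. -/
noncomputable def sdepth {n : ℕ} (I : Ideal (MvPolynomial (Fin n) K)) : ℕ :=
  sSup { k | ∃ (s : ℕ) (u : Fin s → MvPolynomial (Fin n) K) (Z : Fin s → Finset (Fin n)),
    IsStanleyDecomp I u Z ∧ ∀ i, k ≤ (Z i).card }

open Finset

theorem Finset.card_mul_pred_le_choose_two {ι : Type*} [Fintype ι] [DecidableEq ι]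
    {R : Finset ι} {Z : ι → Finset ι} {k : ℕ} (hk : ∀ j ∈ R, k ≤ #(Z j))
    (hZ : ∀ j ∈ R, ∀ j' ∈ R, j ≠ j' → j' ∈ Z j → j ∉ Z j') :
    #R * (k - 1) ≤ (Fintype.card ι).choose 2 := by
  calc #R * (k - 1) ≤ ∑ j ∈ R, #((Z j).erase j) :=
        R.card_nsmul_le_sum _ _ fun j hj =>
          (Nat.sub_le_sub_right (hk j hj) 1).trans pred_card_le_card_erase
    _ = #(R.sigma fun j => (Z j).erase j) := (card_sigma _ _).symm
    _ ≤ #((univ : Finset ι).offDiag.image Sym2.mk.uncurry) := by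
        refine card_le_card_of_injOn (fun p => s(p.1, p.2)) ?_ ?_
        · rintro ⟨j, z⟩ hjz
          simp only [coe_sigma, Set.mem_sigma_iff, mem_coe, mem_erase] at hjz
          simp only [coe_image, coe_offDiag, coe_univ, Set.mem_image, Set.mem_offDiag]
          exact ⟨(j, z), ⟨trivial, trivial, Ne.symm hjz.2.1⟩, rfl⟩
        · rintro ⟨j, z⟩ hjz ⟨j', z'⟩ hjz' heq
          simp only [coe_sigma, Set.mem_sigma_iff, mem_coe, mem_erase] at hjz hjz'
          rcases Sym2.eq_iff.mp heq with ⟨rfl, rfl⟩ | ⟨rfl, rfl⟩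
          · rfl
          · exact absurd hjz'.2.2 (hZ _ hjz.1 _ hjz'.1 (Ne.symm hjz.2.1) hjz.2.2)
    _ = (Fintype.card ι).choose 2 := Sym2.card_image_offDiag _

theorem Finsupp.coe_support_add_single_subset {α M : Type*} [AddZeroClass M] {f : α →₀ M}
    {T : Set α} (hf : ↑f.support ⊆ T) {a : α} (ha : a ∈ T) (m : M) :
    ↑(f + Finsupp.single a m).support ⊆ T := fun l hl => by
  classical
  rcases Finset.mem_union.mp (Finsupp.support_add hl) with hl | hl
  · exact hf hl
  · rwa [Finset.mem_singleton.mp (Finsupp.support_single_subset hl)]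

section MonomialIdeal

variable {σ R : Type*} [CommSemiring R]

theorem MvPolynomial.X_mem_ideal_span_X_image_iff [Nontrivial R] {s : Set σ} {i : σ} :
    (X i : MvPolynomial σ R) ∈ Ideal.span (X '' s) ↔ i ∈ s := by
  refine ⟨fun h => ?_, fun h => Ideal.subset_span ⟨i, h, rfl⟩⟩
  classical
  obtain ⟨j, hj, hij⟩ :=
    mem_ideal_span_X_image.mp h _ (by rw [support_X]; exact mem_singleton_self _)
  rw [Finsupp.single_apply] at hij
  obtain rfl : i = j := by_contra fun hne => hij (if_neg hne)
  exact hj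

theorem Ideal.monomial_one_mem_of_le {I : Ideal (MvPolynomial σ R)} {d e : σ →₀ ℕ}
    (hde : d ≤ e) (hd : monomial d (1 : R) ∈ I) : monomial e (1 : R) ∈ I :=
  I.mem_of_dvd ⟨monomial (e - d) 1, by rw [monomial_mul, one_mul, add_tsub_cancel_of_le hde]⟩ hd

theorem Ideal.IsPrimary.monomial_one_mem_of_add_single_mem {I : Ideal (MvPolynomial σ R)}
    (hI : I.IsPrimary) {i : σ} (hi : X i ∉ I.radical) {d : σ →₀ ℕ} {a : ℕ}
    (h : monomial (d + Finsupp.single i a) (1 : R) ∈ I) : monomial d (1 : R) ∈ I := by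
  rw [← one_mul (1 : R), ← monomial_mul, ← X_pow_eq_monomial] at h
  exact ((Ideal.isPrimary_iff.mp hI).2 h).resolve_right
    fun ha => hi (Ideal.mem_radical_of_pow_mem ha)

theorem Ideal.exists_monomial_notMem_forall_add_single_mem [Finite σ]
    {I : Ideal (MvPolynomial σ R)} (hI : I ≠ ⊤) {T : Set σ}
    (hT : ∀ j ∈ T, X j ∈ I.radical) :
    ∃ c : σ →₀ ℕ, monomial c (1 : R) ∉ I ∧
      ∀ j ∈ T, monomial (c + Finsupp.single j 1) (1 : R) ∈ I := by
  classical
  choose! m hm using fun j hj => Ideal.mem_radical_iff.mp (hT j hj)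
  set S := {c : σ →₀ ℕ | ↑c.support ⊆ T ∧ monomial c (1 : R) ∉ I}
  have hS : S ⊆ Set.Iic (Finsupp.equivFunOnFinite.symm m) := by
    rintro c ⟨hcT, hcI⟩ j
    by_contra! hlt
    replace hlt : m j < c j := by simpa using hlt
    have hj : j ∈ T := hcT (Finsupp.mem_support_iff.mpr (by omega))
    refine hcI (I.monomial_one_mem_of_le (Finsupp.single_le_iff.mpr hlt.le) ?_)
    rw [← X_pow_eq_monomial]
    exact hm j hj
  have h0 : (0 : σ →₀ ℕ) ∈ S := ⟨by simp, by simpa using (I.ne_top_iff_one).mp hI⟩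
  obtain ⟨c, hc⟩ := ((Set.finite_Iic _).subset hS).exists_maximal ⟨0, h0⟩
  refine ⟨c, hc.prop.2, fun j hj => ?_⟩
  by_contra hcj
  have := hc.2 ⟨Finsupp.coe_support_add_single_subset hc.prop.1 hj 1, hcj⟩ le_self_add j
  simp at this

end MonomialIdeal

section StanleyDecomp

variable {n : ℕ}

theorem stanleySpace_monomial (D : Fin n →₀ ℕ) (Z : Finset (Fin n)) :
    stanleySpace (monomial D (1 : K)) Z =
      restrictSupport K ((D + ·) '' {d | ↑d.support ⊆ (Z : Set (Fin n))}) := by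
  rw [stanleySpace, restrictSupport_eq_span, Set.image_image]
  congr 1
  ext w
  simp only [monomial_mul, one_mul, Set.mem_image, eq_comm]
  rfl

theorem monomial_mem_stanleySpace_monomial_iff {D e : Fin n →₀ ℕ} {Z : Finset (Fin n)} :
    monomial e (1 : K) ∈ stanleySpace (monomial D (1 : K)) Z ↔
      ∃ d : Fin n →₀ ℕ, ↑d.support ⊆ (Z : Set (Fin n)) ∧ D + d = e := by
  simp [stanleySpace_monomial, monomial_mem_restrictSupport]

theorem monomial_add_single_mem_stanleySpace {D e : Fin n →₀ ℕ} {Z : Finset (Fin n)}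
    (he : monomial e (1 : K) ∈ stanleySpace (monomial D (1 : K)) Z) {z : Fin n} (hz : z ∈ Z) :
    monomial (e + Finsupp.single z 1) (1 : K) ∈ stanleySpace (monomial D (1 : K)) Z := by
  obtain ⟨d, hd, rfl⟩ := monomial_mem_stanleySpace_monomial_iff.mp he
  exact monomial_mem_stanleySpace_monomial_iff.mpr ⟨d + Finsupp.single z 1,
    Finsupp.coe_support_add_single_subset hd hz 1, (add_assoc ..).symm⟩

namespace IsStanleyDecomp

variable {I : Ideal (MvPolynomial (Fin n) K)} {s : ℕ} {D : Fin s → Fin n →₀ ℕ}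
  {Z : Fin s → Finset (Fin n)}

theorem monomial_mem (h : IsStanleyDecomp I (fun i => monomial (D i) (1 : K)) Z) (i : Fin s) :
    monomial (D i) (1 : K) ∈ I := by
  have hle : stanleySpace (monomial (D i) (1 : K)) (Z i) ≤ I.restrictScalars K :=
    h.2.2 ▸ le_iSup (fun i => stanleySpace (monomial (D i) (1 : K)) (Z i)) i
  exact hle (monomial_mem_stanleySpace_monomial_iff.mpr ⟨0, by simp, add_zero _⟩)

theorem exists_mem (h : IsStanleyDecomp I (fun i => monomial (D i) (1 : K)) Z)
    {e : Fin n →₀ ℕ} (he : monomial e (1 : K) ∈ I) :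
    ∃ i, monomial e (1 : K) ∈ stanleySpace (monomial (D i) (1 : K)) (Z i) := by
  have he' : monomial e (1 : K) ∈
      restrictSupport K (⋃ i, (D i + ·) '' {d | ↑d.support ⊆ (Z i : Set (Fin n))}) := by
    rw [restrictSupport_eq_span, Set.image_iUnion, Submodule.span_iUnion]
    simp only [← restrictSupport_eq_span, ← stanleySpace_monomial]
    exact h.2.2 ▸ he
  obtain ⟨i, hi⟩ := Set.mem_iUnion.mp
    (((monomial_mem_restrictSupport K).mp he').resolve_right one_ne_zero)
  exact ⟨i, stanleySpace_monomial (K := K) _ _ ▸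
    (monomial_mem_restrictSupport K).mpr (.inl hi)⟩

theorem eq_of_mem (h : IsStanleyDecomp I (fun i => monomial (D i) (1 : K)) Z)
    {p : MvPolynomial (Fin n) K} (hp : p ≠ 0) {i i' : Fin s}
    (hi : p ∈ stanleySpace (monomial (D i) (1 : K)) (Z i))
    (hi' : p ∈ stanleySpace (monomial (D i') (1 : K)) (Z i')) : i = i' :=
  by_contra fun hne => hp (Submodule.disjoint_def.mp (h.2.1.pairwiseDisjoint hne) p hi hi')

theorem monomial_mem_of_mem_of_mem (h : IsStanleyDecomp I (fun i => monomial (D i) (1 : K)) Z)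
    {b : Fin n →₀ ℕ} {j j' : Fin n} (hjj' : j ≠ j') {i i' : Fin s}
    (hi : monomial (b + Finsupp.single j 1) (1 : K) ∈
      stanleySpace (monomial (D i) (1 : K)) (Z i))
    (hi' : monomial (b + Finsupp.single j' 1) (1 : K) ∈
      stanleySpace (monomial (D i') (1 : K)) (Z i'))
    (hj' : j' ∈ Z i) (hj : j ∈ Z i') : monomial b (1 : K) ∈ I := by
  have hii' : i = i' := by
    refine h.eq_of_mem (monomial_eq_zero.not.mpr one_ne_zero)
      (monomial_add_single_mem_stanleySpace hi hj') ?_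
    rw [add_right_comm]
    exact monomial_add_single_mem_stanleySpace hi' hj
  subst hii'
  obtain ⟨d, -, hd⟩ := monomial_mem_stanleySpace_monomial_iff.mp hi
  obtain ⟨d', -, hd'⟩ := monomial_mem_stanleySpace_monomial_iff.mp hi'
  refine I.monomial_one_mem_of_le (fun l => ?_) (h.monomial_mem i)
  have hl := DFunLike.congr_fun hd l
  have hl' := DFunLike.congr_fun hd' l
  simp only [Finsupp.add_apply, Finsupp.single_apply] at hl hl'
  split_ifs at hl hl' <;> omega

theorem card_mul_pred_le_choose_two
    (h : IsStanleyDecomp I (fun i => monomial (D i) (1 : K)) Z) {k : ℕ} (hk : ∀ i, k ≤ #(Z i))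
    {b : Fin n →₀ ℕ} (hb : monomial b (1 : K) ∉ I) {R : Finset (Fin n)}
    (hR : ∀ j ∈ R, monomial (b + Finsupp.single j 1) (1 : K) ∈ I) :
    #R * (k - 1) ≤ n.choose 2 := by
  rcases R.eq_empty_or_nonempty with rfl | ⟨j₀, hj₀⟩
  · simp
  have : Nonempty (Fin s) := ⟨(h.exists_mem (hR j₀ hj₀)).choose⟩
  choose! idx hidx using fun j hj => h.exists_mem (hR j hj)
  simpa using Finset.card_mul_pred_le_choose_two (Z := fun j => Z (idx j)) (fun j _ => hk _)
    fun j hj j' hj' hne hj'Z hjZ => hb (h.monomial_mem_of_mem_of_mem hne (hidx j hj)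
      (hidx j' hj') hj'Z hjZ)

end IsStanleyDecomp

end StanleyDecomp

theorem two_mul_le_of_pred_mul_le_choose_two {n m : ℕ} (hn : 2 ≤ n)
    (h : (n - 1) * m ≤ n.choose 2) : 2 * m ≤ n := by
  rw [Nat.choose_two_right, Nat.le_div_iff_mul_le two_pos] at h
  refine Nat.le_of_mul_le_mul_left ?_ (show 0 < n - 1 by omega)
  calc (n - 1) * (2 * m) = (n - 1) * m * 2 := by ring
    _ ≤ n * (n - 1) := h
    _ = (n - 1) * n := mul_comm _ _

theorem sdepth_inter_le_of_radicals_var_rest_general {n : ℕ} (hn : 2 ≤ n)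
    (Q Q' : Ideal (MvPolynomial (Fin n) K))
    (hQ'p : Q'.IsPrimary)
    (hQr : Q.radical =
      Ideal.span ((fun i => (X i : MvPolynomial (Fin n) K)) '' {i | (i : ℕ) < 1}))
    (hQ'r : Q'.radical =
      Ideal.span ((fun i => (X i : MvPolynomial (Fin n) K)) '' {i | 1 ≤ (i : ℕ)})) :
    sdepth (Q ⊓ Q') ≤ 1 + (n - 1 + 1) / 2 := by
  have : NeZero n := ⟨by omega⟩
  obtain ⟨a, haQ⟩ : ∃ a, monomial (Finsupp.single 0 a) (1 : K) ∈ Q := by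
    simp_rw [← X_pow_eq_monomial]
    rw [← Ideal.mem_radical_iff, hQr, X_mem_ideal_span_X_image_iff]
    simp
  have hX0 : X 0 ∉ Q'.radical := by rw [hQ'r, X_mem_ideal_span_X_image_iff]; simp
  obtain ⟨c, hcQ', hc⟩ := Ideal.exists_monomial_notMem_forall_add_single_mem
    (Ideal.isPrimary_iff.mp hQ'p).1 fun j hj => by rwa [hQ'r, X_mem_ideal_span_X_image_iff]
  have hb : monomial (c + Finsupp.single 0 a) (1 : K) ∉ Q ⊓ Q' :=
    fun h => hcQ' (hQ'p.monomial_one_mem_of_add_single_mem hX0 h.2)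
  have hbj : ∀ j ∈ univ.erase 0,
      monomial (c + Finsupp.single 0 a + Finsupp.single j 1) (1 : K) ∈ Q ⊓ Q' := by
    intro j hj
    have hj1 : 1 ≤ (j : ℕ) :=
      Nat.one_le_iff_ne_zero.mpr (Fin.val_ne_zero_iff.mpr (ne_of_mem_erase hj))
    exact ⟨Q.monomial_one_mem_of_le (le_add_right le_add_self) haQ,
      Q'.monomial_one_mem_of_le (by gcongr; exact le_self_add) (hc j hj1)⟩
  refine csSup_le' ?_
  rintro k ⟨s, u, Z, hdec, hk⟩
  choose D hD using hdec.1
  obtain rfl : u = fun i => monomial (D i) 1 := funext hD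
  have := hdec.card_mul_pred_le_choose_two hk hb hbj
  rw [card_erase_of_mem (mem_univ _), card_univ, Fintype.card_fin] at this
  have := two_mul_le_of_pred_mul_le_choose_two hn this
  omega

/-- If `Q, Q'` are monomial primary ideals with `√Q = (x_1)` and
`√Q' = (x_2,…,x_n)`, `n ≥ 2`, then `sdepth(Q ∩ Q') ≤ 1 + ⌈(n−1)/2⌉`. -/
theorem sdepth_inter_le_of_radicals_var_rest {n : ℕ} (hn : 2 ≤ n)
    (Q Q' : Ideal (MvPolynomial (Fin n) K))
    (hQm : IsMonomialIdeal Q) (hQ'm : IsMonomialIdeal Q')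
    (hQp : Q.IsPrimary) (hQ'p : Q'.IsPrimary)
    (hQr : Q.radical =
      Ideal.span ((fun i => (X i : MvPolynomial (Fin n) K)) '' {i | (i : ℕ) < 1}))
    (hQ'r : Q'.radical =
      Ideal.span ((fun i => (X i : MvPolynomial (Fin n) K)) '' {i | 1 ≤ (i : ℕ)})) :
    sdepth (Q ⊓ Q') ≤ 1 + (n - 1 + 1) / 2 :=
  sdepth_inter_le_of_radicals_var_rest_general hn Q Q' hQ'p hQr hQ'r
end

section
/- Let Q and Q' be monomial primary ideals of S = K[x_1,…,x_n] with √Q = (x_1,…,x_t) and √Q' = (x_{r+1},…,x_n), where 1 < r ≤ t < n and n ≥ 4. Then sdepth(Q ∩ Q') ≤ (n + t − r + 2)/2, i.e. 2·sdepth(Q ∩ Q') ≤ n + t − r + 2. -/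
open MvPolynomial

variable {K : Type*} [Field K]

/-!
Choose `c` so large that `x_i^c ∈ Q` for `i ≤ t` and `x_i^c ∈ Q'` for `i > r`, and let
`w_S = ∏_{i ∈ S} x_i^c` (the monomial with exponent `constOn S c`). Then `w_S ∈ Q ∩ Q'`
iff `S` lies neither in `X = {x_1, …, x_r}` nor in `Y = {x_{t+1}, …, x_n}`. Fix a Stanley
decomposition `⊕ u_i K[Z_i]` of `Q ∩ Q'` with all `|Z_i| ≥ k`. For `a ∈ X`, `b ∈ Y` the
monomial `w_{ab}` lies in some `u_p K[Z_p]`; then so does `w_{supp u_p}`, which forces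
`supp u_p = {a, b}`, and so does `w_{abx}` for every `x ∈ Z_p`. Hence the triple `{a, b, x}`
determines the pair `(a, b)`, and counting the triples with `x ∈ (X ∪ Y) \ {a, b}` gives
`r(n-t)(k - (t-r) - 2) ≤ C(r,2)(n-t) + r·C(n-t,2)`, that is, `2k ≤ n + t - r + 2`.
-/

open Finset

section TripleCounting

variable {α : Type*} [DecidableEq α]

def TripleDeterminesPair (X Y : Finset α) (W : α → α → Finset α) : Prop :=
  ∀ a ∈ X, ∀ b ∈ Y, ∀ a' ∈ X, ∀ b' ∈ Y, ∀ x ∈ W a b, ∀ x' ∈ W a' b',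
    ({a, b, x} : Finset α) = {a', b', x'} → a = a' ∧ b = b'

namespace TripleDeterminesPair

variable {X Y : Finset α} {W : α → α → Finset α}

theorem swap (h : TripleDeterminesPair X Y W) : TripleDeterminesPair Y X fun b a => W a b :=
  fun b hb a ha b' hb' a' ha' x hx x' hx' hT =>
    (h a ha b hb a' ha' b' hb' x hx x' hx' (by rwa [insert_comm, insert_comm a'])).symm

theorem sum_card_inter_erase_le (h : TripleDeterminesPair X Y W) :
    ∑ a ∈ X, ∑ b ∈ Y, #((W a b ∩ X).erase a) ≤ (#X).choose 2 * #Y := by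
  rw [← sum_product' (f := fun a b => #((W a b ∩ X).erase a)), ← card_sigma,
    ← card_powersetCard, ← card_product]
  refine card_le_card_of_injOn (fun x => (({x.1.1, x.2} : Finset α), x.1.2)) ?_ ?_
  · rintro ⟨⟨a, b⟩, x⟩ hx
    simp only [coe_sigma, Set.mem_sigma_iff, mem_coe, mem_product, mem_erase, mem_inter] at hx
    obtain ⟨⟨ha, hb⟩, hxa, -, hx⟩ := hx
    simp only [coe_product, Set.mem_prod, mem_coe, mem_powersetCard]
    exact ⟨⟨insert_subset ha (singleton_subset_iff.2 hx), card_pair (Ne.symm hxa)⟩, hb⟩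
  · rintro ⟨⟨a, b⟩, x⟩ hx ⟨⟨a', b'⟩, x'⟩ hx' hxx'
    simp only [coe_sigma, Set.mem_sigma_iff, mem_coe, mem_product, mem_erase, mem_inter]
      at hx hx'
    simp only [Prod.mk.injEq] at hxx'
    obtain ⟨hax, rfl⟩ := hxx'
    have htriple : ({a, b, x} : Finset α) = {a', b, x'} := by
      rw [insert_comm, hax, insert_comm]
    obtain ⟨rfl, -⟩ := h a hx.1.1 b hx.1.2 a' hx'.1.1 b hx'.1.2 x hx.2.2.1 x' hx'.2.2.1 htriple
    have hx_mem : x ∈ ({a, x'} : Finset α) := hax ▸ mem_insert_of_mem (mem_singleton_self x)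
    obtain rfl : x = x' := by simpa [hx.2.1] using hx_mem
    rfl

theorem two_mul_le [Fintype α] (h : TripleDeterminesPair X Y W) {k : ℕ} (hX : X.Nonempty)
    (hY : Y.Nonempty) (hk : ∀ a ∈ X, ∀ b ∈ Y, k ≤ #(W a b)) :
    2 * k ≤ #X + #Y + 2 * #(X ∪ Y)ᶜ + 2 := by
  set O := (X ∪ Y)ᶜ
  have hpair : ∀ a ∈ X, ∀ b ∈ Y,
      k ≤ #((W a b ∩ X).erase a) + #((W a b ∩ Y).erase b) + (#O + 2) := by
    intro a ha b hb
    have hcover : W a b ⊆ (W a b ∩ X ∪ W a b ∩ Y) ∪ O := by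
      intro j hj
      by_cases hjX : j ∈ X <;> by_cases hjY : j ∈ Y <;> simp [O, *]
    have hXa := pred_card_le_card_erase (s := W a b ∩ X) (a := a)
    have hYb := pred_card_le_card_erase (s := W a b ∩ Y) (a := b)
    calc k ≤ #(W a b) := hk a ha b hb
      _ ≤ #(W a b ∩ X ∪ W a b ∩ Y) + #O := (card_le_card hcover).trans (card_union_le _ _)
      _ ≤ #(W a b ∩ X) + #(W a b ∩ Y) + #O := by grw [card_union_le]
      _ ≤ _ := by omega
  have hA := h.sum_card_inter_erase_le
  have hB := h.swap.sum_card_inter_erase_le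
  rw [sum_comm] at hB
  have hsum : #X * #Y * k ≤ (#X).choose 2 * #Y + (#Y).choose 2 * #X + #X * #Y * (#O + 2) := by
    calc #X * #Y * k = ∑ a ∈ X, ∑ b ∈ Y, k := by simp only [sum_const, smul_eq_mul]; ring
      _ ≤ ∑ a ∈ X, ∑ b ∈ Y,
            (#((W a b ∩ X).erase a) + #((W a b ∩ Y).erase b) + (#O + 2)) :=
        sum_le_sum fun a ha => sum_le_sum fun b hb => hpair a ha b hb
      _ ≤ _ := by simp only [sum_add_distrib, sum_const, smul_eq_mul]; linarith
  have hchoose : ∀ m : ℕ, 2 * m.choose 2 ≤ m * (m - 1) := fun m => by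
    rw [Nat.choose_two_right]; exact Nat.mul_div_le _ _
  have hA2 := Nat.mul_le_mul_right #Y (hchoose #X)
  have hB2 := Nat.mul_le_mul_right #X (hchoose #Y)
  refine Nat.le_of_mul_le_mul_left ?_ (Nat.mul_pos hX.card_pos hY.card_pos)
  obtain ⟨x, hx⟩ : ∃ x, #X = x + 1 := ⟨#X - 1, by have := hX.card_pos; omega⟩
  obtain ⟨y, hy⟩ : ∃ y, #Y = y + 1 := ⟨#Y - 1, by have := hY.card_pos; omega⟩
  simp only [hx, hy, Nat.add_sub_cancel] at hsum hA2 hB2 ⊢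
  nlinarith

end TripleDeterminesPair

theorem eq_and_eq_of_pair_eq_pair {X Y : Finset α} (hXY : Disjoint X Y) {a a' b b' : α}
    (ha : a ∈ X) (ha' : a' ∈ X) (hb : b ∈ Y) (hb' : b' ∈ Y)
    (h : ({a, b} : Finset α) = {a', b'}) : a = a' ∧ b = b' := by
  have hma : a ∈ ({a', b'} : Finset α) := h ▸ mem_insert_self a {b}
  have hmb : b ∈ ({a', b'} : Finset α) := h ▸ mem_insert_of_mem (mem_singleton_self b)
  simp only [mem_insert, mem_singleton] at hma hmb
  rcases hma with rfl | rfl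
  · rcases hmb with rfl | rfl
    · exact absurd hb (disjoint_left.1 hXY ha')
    · exact ⟨rfl, rfl⟩
  · exact absurd hb' (disjoint_left.1 hXY ha)

end TripleCounting

theorem Ideal.exists_pow_mem_of_mem_radical {R : Type*} [CommSemiring R] [IsNoetherianRing R]
    (I : Ideal R) : ∃ N, ∀ m, N ≤ m → ∀ x ∈ I.radical, x ^ m ∈ I := by
  obtain ⟨N, hN⟩ := I.exists_radical_pow_le_of_fg (IsNoetherian.noetherian _)
  exact ⟨N, fun m hm x hx => I.pow_mem_of_pow_mem (hN (Ideal.pow_mem_pow hx N)) hm⟩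

noncomputable def constOn {σ : Type*} (S : Finset σ) (c : ℕ) : σ →₀ ℕ :=
  Finsupp.indicator S fun _ _ => c

section ConstOn

variable {σ : Type*} [DecidableEq σ]

theorem constOn_apply (S : Finset σ) (c : ℕ) (j : σ) :
    constOn S c j = if j ∈ S then c else 0 := by
  simp [constOn, Finsupp.indicator_apply]

theorem monomial_constOn_mem_iff {R : Type*} [CommSemiring R] [Nontrivial R]
    {Q : Ideal (MvPolynomial σ R)} {A : Set σ} {c : ℕ}
    (hQ : Q.radical = Ideal.span (X '' A)) (hc : ∀ i ∈ A, X i ^ c ∈ Q) (S : Finset σ) :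
    monomial (constOn S c) (1 : R) ∈ Q ↔ ∃ i ∈ S, i ∈ A := by
  constructor
  · intro h
    have hrad : monomial (constOn S c) (1 : R) ∈ Ideal.span (X '' A) := hQ ▸ Ideal.le_radical h
    obtain ⟨i, hiA, hi⟩ := mem_ideal_span_X_image.1 hrad (constOn S c) (by simp)
    refine ⟨i, ?_, hiA⟩
    by_contra hiS
    simp [constOn_apply, hiS] at hi
  · rintro ⟨i, hiS, hiA⟩
    have hle : Finsupp.single i c ≤ constOn S c := by
      simp [Finsupp.single_le_iff, constOn_apply, hiS]
    refine Ideal.mem_of_dvd _ ⟨monomial (constOn S c - Finsupp.single i c) 1, ?_⟩ (hc i hiA)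
    rw [X_pow_eq_monomial, monomial_mul, add_tsub_cancel_of_le hle, one_mul]

end ConstOn

section StanleySpaces

variable {n : ℕ}

theorem stanleySpace_monomial_s14 (e : Fin n →₀ ℕ) (Z : Finset (Fin n)) :
    stanleySpace (monomial e (1 : K)) Z =
      restrictSupport K {g | e ≤ g ∧ ∀ j, e j < g j → j ∈ Z} := by
  rw [stanleySpace, restrictSupport_eq_span]
  congr 1
  ext w
  constructor
  · rintro ⟨d, hd, rfl⟩
    refine ⟨e + d, ⟨le_self_add, fun j hj => hd ?_⟩, by rw [monomial_mul, one_mul]⟩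
    simp only [Finsupp.coe_add, Pi.add_apply, lt_add_iff_pos_right] at hj
    exact Finsupp.mem_support_iff.2 hj.ne'
  · rintro ⟨g, ⟨hle, hZ⟩, rfl⟩
    refine ⟨g - e, fun j hj => hZ j ?_, ?_⟩
    · simpa [Nat.sub_ne_zero_iff_lt] using hj
    · rw [monomial_mul, add_tsub_cancel_of_le hle, one_mul]

theorem monomial_mem_stanleySpace_iff {e g : Fin n →₀ ℕ} {Z : Finset (Fin n)} :
    monomial g (1 : K) ∈ stanleySpace (monomial e 1) Z ↔
      e ≤ g ∧ ∀ j, e j < g j → j ∈ Z := by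
  simp [stanleySpace_monomial_s14]

end StanleySpaces

section ConstOnStanley

variable {n : ℕ} {S U Z : Finset (Fin n)} {c : ℕ} {e : Fin n →₀ ℕ}

theorem support_subset_of_monomial_constOn_mem
    (h : monomial (constOn S c) (1 : K) ∈ stanleySpace (monomial e 1) Z) : e.support ⊆ S := by
  intro j hj
  by_contra hjS
  have hle := (monomial_mem_stanleySpace_iff.1 h).1 j
  rw [constOn_apply, if_neg hjS, Nat.le_zero] at hle
  exact Finsupp.mem_support_iff.1 hj hle

theorem monomial_constOn_mem_stanleySpace_of_subset
    (h : monomial (constOn S c) (1 : K) ∈ stanleySpace (monomial e 1) Z)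
    (heU : e.support ⊆ U) (hUS : U ⊆ S ∪ Z) :
    monomial (constOn U c) (1 : K) ∈ stanleySpace (monomial e 1) Z := by
  obtain ⟨hle, hZ⟩ := monomial_mem_stanleySpace_iff.1 h
  have heS := support_subset_of_monomial_constOn_mem h
  refine monomial_mem_stanleySpace_iff.2 ⟨fun j => ?_, fun j hj => ?_⟩
  · by_cases hj : j ∈ e.support
    · simpa [constOn_apply, heU hj, heS hj] using hle j
    · simp [Finsupp.notMem_support_iff.1 hj]
  · have hjU : j ∈ U := by
      by_contra hjU
      simp [constOn_apply, hjU] at hj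
    rcases mem_union.1 (hUS hjU) with hjS | hjZ
    · exact hZ j (by simpa [constOn_apply, hjU, hjS] using hj)
    · exact hjZ

end ConstOnStanley

namespace IsStanleyDecomp

variable {n s : ℕ} {I : Ideal (MvPolynomial (Fin n) K)} {u : Fin s → MvPolynomial (Fin n) K}
  {Z : Fin s → Finset (Fin n)} {X Y : Finset (Fin n)} {c : ℕ}

theorem exists_exponents (h : IsStanleyDecomp I u Z) :
    ∃ e : Fin s → Fin n →₀ ℕ, u = fun i => monomial (e i) 1 := by
  choose e he using h.1
  exact ⟨e, funext he⟩

theorem mem_of_mem_stanleySpace (h : IsStanleyDecomp I u Z) {x : MvPolynomial (Fin n) K}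
    {i : Fin s} (hx : x ∈ stanleySpace (u i) (Z i)) : x ∈ I := by
  have hx' := le_iSup (fun i => stanleySpace (u i) (Z i)) i hx
  rwa [h.2.2] at hx'

theorem eq_of_mem_stanleySpace (h : IsStanleyDecomp I u Z) {x : MvPolynomial (Fin n) K}
    (hx : x ≠ 0) {i j : Fin s} (hi : x ∈ stanleySpace (u i) (Z i))
    (hj : x ∈ stanleySpace (u j) (Z j)) : i = j := by
  by_contra hij
  exact hx (Submodule.disjoint_def.1 (h.2.1.pairwiseDisjoint hij) x hi hj)

theorem exists_monomial_mem_stanleySpace {e : Fin s → Fin n →₀ ℕ}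
    (h : IsStanleyDecomp I (fun i => monomial (e i) (1 : K)) Z) {g : Fin n →₀ ℕ}
    (hg : monomial g (1 : K) ∈ I) :
    ∃ i, monomial g (1 : K) ∈ stanleySpace (monomial (e i) 1) (Z i) := by
  have hle : (⨆ i, stanleySpace (monomial (e i) (1 : K)) (Z i)) ≤
      restrictSupport K (⋃ i, {g | e i ≤ g ∧ ∀ j, e i j < g j → j ∈ Z i}) :=
    iSup_le fun i => (stanleySpace_monomial_s14 (e i) (Z i)).le.trans
      (restrictSupport_mono K
        (Set.subset_iUnion (fun i => {g | e i ≤ g ∧ ∀ j, e i j < g j → j ∈ Z i}) i))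
  have hg' : monomial g (1 : K) ∈ ⨆ i, stanleySpace (monomial (e i) (1 : K)) (Z i) :=
    h.2.2 ▸ hg
  replace hg' := hle hg'
  simp only [monomial_mem_restrictSupport, Set.mem_iUnion, one_ne_zero, or_false] at hg'
  obtain ⟨i, hi⟩ := hg'
  exact ⟨i, monomial_mem_stanleySpace_iff.2 hi⟩

theorem support_eq_pair {e : Fin s → Fin n →₀ ℕ}
    (h : IsStanleyDecomp I (fun i => monomial (e i) (1 : K)) Z)
    (hw : ∀ S, monomial (constOn S c) (1 : K) ∈ I ↔ ¬S ⊆ X ∧ ¬S ⊆ Y)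
    {a b : Fin n} (ha : a ∈ X) (hb : b ∈ Y) {p : Fin s}
    (hp : monomial (constOn {a, b} c) (1 : K) ∈ stanleySpace (monomial (e p) 1) (Z p)) :
    (e p).support = {a, b} := by
  have hsub := support_subset_of_monomial_constOn_mem hp
  have hmem := h.mem_of_mem_stanleySpace (i := p)
    (monomial_constOn_mem_stanleySpace_of_subset hp subset_rfl (hsub.trans subset_union_left))
  obtain ⟨hX, hY⟩ := (hw _).1 hmem
  refine hsub.antisymm (insert_subset ?_ (singleton_subset_iff.2 ?_))
  · by_contra ha'
    exact hY (((subset_insert_iff_of_notMem ha').1 hsub).trans (singleton_subset_iff.2 hb))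
  · by_contra hb'
    rw [pair_comm] at hsub
    exact hX (((subset_insert_iff_of_notMem hb').1 hsub).trans (singleton_subset_iff.2 ha))

theorem two_mul_le_card (h : IsStanleyDecomp I u Z)
    {k : ℕ} (hk : ∀ i, k ≤ #(Z i)) (hXY : Disjoint X Y) (hX : X.Nonempty) (hY : Y.Nonempty)
    (hw : ∀ S, monomial (constOn S c) (1 : K) ∈ I ↔ ¬S ⊆ X ∧ ¬S ⊆ Y) :
    2 * k ≤ #X + #Y + 2 * #(X ∪ Y)ᶜ + 2 := by
  obtain ⟨e, rfl⟩ := h.exists_exponents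
  have hpair : ∀ a ∈ X, ∀ b ∈ Y, ∃ p,
      monomial (constOn {a, b} c) (1 : K) ∈ stanleySpace (monomial (e p) 1) (Z p) :=
    fun a ha b hb => h.exists_monomial_mem_stanleySpace <| (hw _).2
      ⟨not_subset.2 ⟨b, by simp, disjoint_right.1 hXY hb⟩,
        not_subset.2 ⟨a, by simp, disjoint_left.1 hXY ha⟩⟩
  -- a default index, so that `choose!` yields a function on all pairs
  have : Nonempty (Fin s) :=
    let ⟨a, ha⟩ := hX
    let ⟨b, hb⟩ := hY
    let ⟨p, _⟩ := hpair a ha b hb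
    ⟨p⟩
  choose! p hp using hpair
  have hsupp : ∀ a ∈ X, ∀ b ∈ Y, (e (p a b)).support = {a, b} :=
    fun a ha b hb => h.support_eq_pair hw ha hb (hp a ha b hb)
  have htriple : ∀ a ∈ X, ∀ b ∈ Y, ∀ x ∈ Z (p a b),
      monomial (constOn {a, b, x} c) (1 : K) ∈
        stanleySpace (monomial (e (p a b)) 1) (Z (p a b)) := by
    intro a ha b hb x hx
    refine monomial_constOn_mem_stanleySpace_of_subset (hp a ha b hb) ?_ ?_
    · rw [hsupp a ha b hb]
      intro j
      simp only [mem_insert, mem_singleton]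
      tauto
    · intro j
      simp only [mem_insert, mem_singleton, mem_union]
      rintro (rfl | rfl | rfl) <;> simp [hx]
  refine TripleDeterminesPair.two_mul_le (W := fun a b => Z (p a b)) ?_ hX hY
    fun _ _ _ _ => hk _
  intro a ha b hb a' ha' b' hb' x hx x' hx' hT
  have hpp : p a b = p a' b' := h.eq_of_mem_stanleySpace (monomial_eq_zero.not.2 one_ne_zero)
    (htriple a ha b hb x hx) (hT ▸ htriple a' ha' b' hb' x' hx')
  have hpairs := hsupp a ha b hb
  rw [hpp, hsupp a' ha' b' hb'] at hpairs
  exact (eq_and_eq_of_pair_eq_pair hXY ha' ha hb' hb hpairs).imp Eq.symm Eq.symm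

end IsStanleyDecomp

theorem two_mul_sdepth_le {n c : ℕ} {I : Ideal (MvPolynomial (Fin n) K)} {X Y : Finset (Fin n)}
    (hXY : Disjoint X Y) (hX : X.Nonempty) (hY : Y.Nonempty)
    (hw : ∀ S, monomial (constOn S c) (1 : K) ∈ I ↔ ¬S ⊆ X ∧ ¬S ⊆ Y) :
    2 * sdepth I ≤ #X + #Y + 2 * #(X ∪ Y)ᶜ + 2 := by
  suffices sdepth I ≤ (#X + #Y + 2 * #(X ∪ Y)ᶜ + 2) / 2 by omega
  refine csSup_le' ?_
  rintro k ⟨s, u, Z, hI, hk⟩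
  have := hI.two_mul_le_card hk hXY hX hY hw
  omega

theorem sdepth_inter_le_overlap_general {n t r : ℕ} (hr : 1 < r) (hrt : r ≤ t) (htn : t < n)
    (Q Q' : Ideal (MvPolynomial (Fin n) K))
    (hQr : Q.radical =
      Ideal.span ((fun i => (X i : MvPolynomial (Fin n) K)) '' {i | (i : ℕ) < t}))
    (hQ'r : Q'.radical =
      Ideal.span ((fun i => (X i : MvPolynomial (Fin n) K)) '' {i | r ≤ (i : ℕ)})) :
    2 * sdepth (Q ⊓ Q') ≤ n + t - r + 2 := by
  let r' : Fin n := ⟨r, by omega⟩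
  let t' : Fin n := ⟨t, htn⟩
  obtain ⟨N, hN⟩ := Q.exists_pow_mem_of_mem_radical
  obtain ⟨N', hN'⟩ := Q'.exists_pow_mem_of_mem_radical
  have hw : ∀ S, monomial (constOn S (max N N')) (1 : K) ∈ Q ⊓ Q' ↔
      ¬S ⊆ Iio r' ∧ ¬S ⊆ Ici t' := by
    intro S
    rw [Ideal.mem_inf, and_comm,
      monomial_constOn_mem_iff hQr fun i hi =>
        hN _ (le_max_left N N') _ (hQr ▸ Ideal.subset_span ⟨i, hi, rfl⟩),
      monomial_constOn_mem_iff hQ'r fun i hi =>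
        hN' _ (le_max_right N N') _ (hQ'r ▸ Ideal.subset_span ⟨i, hi, rfl⟩)]
    simp [not_subset, r', t', Fin.lt_def, Fin.le_def]
  have hdisj : Disjoint (Iio r') (Ici t') := disjoint_left.2 fun i hi hi' => by
    simp only [mem_Iio, mem_Ici, Fin.lt_def, Fin.le_def, r', t'] at hi hi'
    omega
  have hO : (Iio r' ∪ Ici t')ᶜ = Ico r' t' := by
    ext i
    simp [r', t', Fin.lt_def, Fin.le_def]
  have := two_mul_sdepth_le hdisj ⟨⟨0, by omega⟩, by simp [r', Fin.lt_def]; omega⟩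
    ⟨t', mem_Ici.2 le_rfl⟩ hw
  rw [hO, Fin.card_Iio, Fin.card_Ici, Fin.card_Ico] at this
  simp only [r', t'] at this
  omega

/-- If `Q, Q'` are monomial primary ideals with `√Q = (x_1,…,x_t)` and
`√Q' = (x_{r+1},…,x_n)`, `1 < r ≤ t < n`, `n ≥ 4`, then
`sdepth(Q ∩ Q') ≤ (n + t − r + 2)/2`, i.e. `2·sdepth(Q ∩ Q') ≤ n + t − r + 2`. -/
theorem sdepth_inter_le_overlap {n t r : ℕ} (hr : 1 < r) (hrt : r ≤ t) (htn : t < n)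
    (hn : 4 ≤ n)
    (Q Q' : Ideal (MvPolynomial (Fin n) K))
    (hQm : IsMonomialIdeal Q) (hQ'm : IsMonomialIdeal Q')
    (hQp : Q.IsPrimary) (hQ'p : Q'.IsPrimary)
    (hQr : Q.radical =
      Ideal.span ((fun i => (X i : MvPolynomial (Fin n) K)) '' {i | (i : ℕ) < t}))
    (hQ'r : Q'.radical =
      Ideal.span ((fun i => (X i : MvPolynomial (Fin n) K)) '' {i | r ≤ (i : ℕ)})) :
    2 * sdepth (Q ⊓ Q') ≤ n + t - r + 2 :=
  sdepth_inter_le_overlap_general hr hrt htn Q Q' hQr hQ'r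
end
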